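/- Let I be a monomial ideal in the polynomial ring K[x_1, …, x_n] over a field K, and let u be a monomial which is a non-zerodivisor modulo I (that is, I : u = I). Then there exists a positive integer k such that (C(I), u^k) ⊆ C((I, u)), where (I, u) denotes the ideal I + (u) and (C(I), u^k) denotes C(I) + (u^k). -/

import Mathlib

noncomputable section

universe u v

/-- The `R`-algebra map `φ : T = R[y_i : i ∈ ι] → R[t]` sending `y_i ↦ f i · t`. -/
def reesHom {R : Type u} [CommRing R] {ι : Type v} (f : ι → R) :
    MvPolynomial ι R →ₐ[R] Polynomial R :=
  MvPolynomial.aeval fun i => Polynomial.C (f i) * Polynomial.X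

/-- `J`, the defining ideal of the Rees algebra of the ideal generated by `f`. -/
def reesJ {R : Type u} [CommRing R] {ι : Type v} (f : ι → R) :
    Ideal (MvPolynomial ι R) :=
  RingHom.ker (reesHom f)

/-- `L`, the ideal of `T` generated by the linear relations `∑ aᵢ yᵢ` with `∑ aᵢ fᵢ = 0`. -/
def linRel {R : Type u} [CommRing R] {ι : Type v} (f : ι → R) :
    Ideal (MvPolynomial ι R) :=
  Ideal.span {p | ∃ a : ι →₀ R, (a.sum fun i r => r * f i) = 0 ∧
    p = a.sum fun i r => MvPolynomial.C r * MvPolynomial.X i}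

/-- The conductor `C(I) = L :_R J = {r ∈ R : r J ⊆ L}`. -/
def conductorIdeal {R : Type u} [CommRing R] {ι : Type v} (f : ι → R) : Ideal R :=
  Submodule.colon (Submodule.restrictScalars R (linRel f))
    (Submodule.restrictScalars R (reesJ f))

/-- The ideal generated by `f` is of linear type if `J = L`. -/
def IsLinearType {R : Type u} [CommRing R] {ι : Type v} (f : ι → R) : Prop :=
  reesJ f = linRel f

end

/-!
A homogeneous `F` of degree `s` in the variables `y` lies in `J` iff `F(f) = 0`, and `J` is spanned
by such elements. Write `y_u` for the variable attached to `u` (`X (Fin.last m)` for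
`Fin.snoc f u`).

Modulo `L` one has `u yᵢ ≡ fᵢ y_u`, so `uˢ F ≡ F(f, u) y_uˢ` for homogeneous `F` of degree `s`;
as `J` is finitely generated, one power `uᵏ` maps `J((I, u))` into `L((I, u))`.

For `r ∈ C(I)` and homogeneous `F ∈ J((I, u))` of degree `s + 1`, write `F = F₀ + y_u q` with `F₀`
free of `y_u`. Then `u q(f, u) = -F₀(f) ∈ I^(s+1)`. The minimal generators of the monomial ideal
`I` are coprime to `u`, hence so are those of every power of `I`, and `q(f, u) ∈ I^(s+1)`. This
lets one trade `y_u q` for `u W` with `F₀ + u W ∈ J(I)`, up to an element of `L((I, u))` and an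
element of `J((I, u))` of degree `s`; induction on `s` gives `r F ∈ L((I, u))`.
-/

open MvPolynomial

section Rees

variable {R : Type*} [CommRing R] {ι : Type*} (g : ι → R)

lemma reesHom_monomial (a : ι →₀ ℕ) (c : R) :
    reesHom g (monomial a c) =
      Polynomial.C (c * a.prod fun i k => g i ^ k) * Polynomial.X ^ a.degree := by
  simp only [reesHom, aeval_monomial, Polynomial.algebraMap_eq, Finsupp.prod, mul_pow,
    Finset.prod_mul_distrib, Finset.prod_pow_eq_pow_sum, map_mul, map_prod, map_pow, mul_assoc]
  rfl

lemma coeff_reesHom (p : MvPolynomial ι R) (s : ℕ) :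
    (reesHom g p).coeff s = eval g (homogeneousComponent s p) := by
  classical
  conv_lhs => rw [p.as_sum]
  rw [map_sum, Polynomial.finsetSum_coeff, homogeneousComponent_apply, map_sum, Finset.sum_filter]
  refine Finset.sum_congr rfl fun d _ => ?_
  rw [reesHom_monomial, Polynomial.coeff_C_mul, Polynomial.coeff_X_pow, eval_monomial]
  split_ifs with h₁ h₂ h₂ <;> simp_all [eq_comm]

lemma mem_reesJ_iff {p : MvPolynomial ι R} :
    p ∈ reesJ g ↔ ∀ s, eval g (homogeneousComponent s p) = 0 := by
  simp only [reesJ, RingHom.mem_ker, Polynomial.ext_iff, coeff_reesHom, Polynomial.coeff_zero]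

lemma MvPolynomial.IsHomogeneous.mem_reesJ_iff {p : MvPolynomial ι R} {s : ℕ}
    (hp : p.IsHomogeneous s) : p ∈ reesJ g ↔ eval g p = 0 := by
  rw [_root_.mem_reesJ_iff]
  refine ⟨fun h => by simpa [homogeneousComponent_eq_self hp] using h s, fun h k => ?_⟩
  rw [homogeneousComponent_of_mem ((mem_homogeneousSubmodule s p).mpr hp)]
  split_ifs <;> simp [h]

lemma homogeneousComponent_mem_reesJ {p : MvPolynomial ι R} (hp : p ∈ reesJ g) (s : ℕ) :
    homogeneousComponent s p ∈ reesJ g := by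
  rw [(homogeneousComponent_isHomogeneous s p).mem_reesJ_iff]
  exact (mem_reesJ_iff g).mp hp s

lemma mem_conductorIdeal_iff {r : R} :
    r ∈ conductorIdeal g ↔ ∀ p ∈ reesJ g, C r * p ∈ linRel g := by
  simp [conductorIdeal, Submodule.mem_colon, smul_eq_C_mul]

end Rees

section LinRel

variable {R : Type*} [CommRing R] {ι : Type*} (g : ι → R)

lemma C_mul_X_sub_C_mul_X_mem_linRel (i j : ι) :
    C (g i) * X j - C (g j) * X i ∈ linRel g := by
  classical
  refine Ideal.subset_span ⟨Finsupp.single j (g i) - Finsupp.single i (g j), ?_, ?_⟩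
  · rw [Finsupp.sum_sub_index fun _ _ _ => sub_mul _ _ _,
      Finsupp.sum_single_index (zero_mul _), Finsupp.sum_single_index (zero_mul _), mul_comm,
      sub_self]
  · rw [Finsupp.sum_sub_index fun _ _ _ => by rw [map_sub, sub_mul],
      Finsupp.sum_single_index (by rw [map_zero, zero_mul]),
      Finsupp.sum_single_index (by rw [map_zero, zero_mul])]

lemma rename_mem_linRel {κ : Type*} {e : ι → κ} {h : κ → R} {p : MvPolynomial ι R}
    (hp : p ∈ linRel (h ∘ e)) : rename e p ∈ linRel h := by
  refine (Ideal.map_le_iff_le_comap.mpr ?_) (Ideal.mem_map_of_mem (rename e) hp)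
  rw [linRel, Ideal.span_le]
  rintro _ ⟨a, ha, rfl⟩
  refine Ideal.subset_span ⟨a.mapDomain e, ?_, ?_⟩
  · rwa [Finsupp.sum_mapDomain_index (fun _ => zero_mul _) fun _ _ _ => add_mul _ _ _]
  · rw [Finsupp.sum_mapDomain_index (fun _ => by rw [map_zero, zero_mul])
      fun _ _ _ => by rw [map_add, add_mul], map_finsuppSum]
    simp only [map_mul, rename_C, rename_X]

variable (l : ι)

lemma mk_C_pow_degree_mul_monomial (a : ι →₀ ℕ) :
    Ideal.Quotient.mk (linRel g) (C (g l) ^ a.degree * monomial a 1) =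
      Ideal.Quotient.mk (linRel g) (C (a.prod fun i k => g i ^ k) * X l ^ a.degree) := by
  classical
  induction a using Finsupp.induction with
  | zero => simp
  | single_add i k a _ _ ih =>
    have hswap : Ideal.Quotient.mk (linRel g) (C (g l) * X i) =
        Ideal.Quotient.mk (linRel g) (C (g i) * X l) :=
      Ideal.Quotient.eq.mpr (C_mul_X_sub_C_mul_X_mem_linRel g l i)
    rw [map_add, Finsupp.degree_single, monomial_single_add,
      Finsupp.prod_add_index' (fun _ => pow_zero _) fun _ _ _ => pow_add _ _ _,
      Finsupp.prod_single_index (h := fun i k => g i ^ k) (pow_zero _)]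
    calc Ideal.Quotient.mk (linRel g) (C (g l) ^ (k + a.degree) * (X i ^ k * monomial a 1))
        = Ideal.Quotient.mk (linRel g) (C (g l) * X i) ^ k *
            Ideal.Quotient.mk (linRel g) (C (g l) ^ a.degree * monomial a 1) := by
          simp only [map_mul, map_pow]
          ring
      _ = Ideal.Quotient.mk (linRel g) (C (g i) * X l) ^ k *
            Ideal.Quotient.mk (linRel g) (C (a.prod fun i k => g i ^ k) * X l ^ a.degree) := by
          rw [hswap, ih]
      _ = Ideal.Quotient.mk (linRel g)
            (C (g i ^ k * a.prod fun i k => g i ^ k) * X l ^ (k + a.degree)) := by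
          simp only [map_mul, map_pow]
          ring

lemma C_pow_mul_sub_mem_linRel {p : MvPolynomial ι R} {s : ℕ} (hp : p.IsHomogeneous s) :
    C (g l) ^ s * p - C (eval g p) * X l ^ s ∈ linRel g := by
  classical
  rw [← Ideal.Quotient.eq]
  conv_lhs => rw [p.as_sum, Finset.mul_sum, map_sum]
  rw [eval_eq, map_sum, Finset.sum_mul, map_sum]
  refine Finset.sum_congr rfl fun d hd => ?_
  have hd : d.degree = s := by
    rw [Finsupp.degree_eq_weight_one]
    exact hp (mem_support_iff.mp hd)
  have hmon : monomial d (coeff d p) = C (coeff d p) * monomial d 1 := by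
    rw [C_mul_monomial, mul_one]
  rw [hmon, mul_left_comm, map_mul, ← hd, mk_C_pow_degree_mul_monomial, ← map_mul, map_mul C,
    mul_assoc]
  rfl

lemma C_pow_totalDegree_mul_mem_linRel {p : MvPolynomial ι R} (hp : p ∈ reesJ g) :
    C (g l) ^ p.totalDegree * p ∈ linRel g := by
  rw [show C (g l) ^ p.totalDegree * p = ∑ s ∈ Finset.range (p.totalDegree + 1),
      C (g l) ^ p.totalDegree * homogeneousComponent s p by
    rw [← Finset.mul_sum, sum_homogeneousComponent]]
  refine Ideal.sum_mem _ fun s hs => ?_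
  have hs : s ≤ p.totalDegree := Nat.lt_succ_iff.mp (Finset.mem_range.mp hs)
  have hcomp := homogeneousComponent_isHomogeneous s p
  have h := C_pow_mul_sub_mem_linRel g l hcomp
  rw [(hcomp.mem_reesJ_iff g).mp (homogeneousComponent_mem_reesJ g hp s), map_zero, zero_mul,
    sub_zero] at h
  rw [← Nat.sub_add_cancel hs, pow_add, mul_assoc]
  exact Ideal.mul_mem_left _ _ h

lemma exists_pow_mem_conductorIdeal [Finite ι] [IsNoetherianRing R] :
    ∃ k, 0 < k ∧ g l ^ k ∈ conductorIdeal g := by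
  obtain ⟨S, hS⟩ := IsNoetherian.noetherian (reesJ g)
  refine ⟨S.sup totalDegree + 1, Nat.succ_pos _, (mem_conductorIdeal_iff g).mpr ?_⟩
  suffices reesJ g ≤ (linRel g).colon {C (g l ^ (S.sup totalDegree + 1))} by
    intro p hp
    simpa [mul_comm] using Submodule.mem_colon_singleton.mp (this hp)
  rw [← hS, Ideal.span_le]
  intro v hv
  have hle : v.totalDegree ≤ S.sup totalDegree + 1 := (Finset.le_sup hv).trans (Nat.le_succ _)
  have hvJ : v ∈ reesJ g := hS ▸ Ideal.subset_span hv
  rw [SetLike.mem_coe, Submodule.mem_colon_singleton, smul_eq_mul, map_pow,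
    ← Nat.sub_add_cancel hle, pow_add, mul_comm, mul_assoc]
  exact Ideal.mul_mem_left _ _ (C_pow_totalDegree_mul_mem_linRel g l hvJ)

end LinRel

lemma MvPolynomial.IsHomogeneous.of_X_mul {R : Type*} [CommSemiring R] {ι : Type*} {j : ι}
    {q : MvPolynomial ι R} {s : ℕ} (h : (X j * q).IsHomogeneous (s + 1)) : q.IsHomogeneous s := by
  intro d hd
  have hd' := h (by rwa [coeff_X_mul] : coeff (Finsupp.single j 1 + d) (X j * q) ≠ 0)
  rw [map_add, Finsupp.weight_single, Pi.one_apply, smul_eq_mul, mul_one] at hd'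
  omega

section Snoc

variable {R : Type*} [CommRing R] {m : ℕ}

noncomputable def evalLastZero : MvPolynomial (Fin (m + 1)) R →ₐ[R] MvPolynomial (Fin m) R :=
  aeval (Fin.snoc X 0)

lemma X_last_dvd_sub_rename_evalLastZero (p : MvPolynomial (Fin (m + 1)) R) :
    X (Fin.last m) ∣ p - rename Fin.castSucc (evalLastZero p) := by
  rw [← Ideal.mem_span_singleton, ← Ideal.Quotient.eq]
  have hcomp : (Ideal.Quotient.mkₐ R (Ideal.span {X (Fin.last m)})).comp
      ((rename Fin.castSucc).comp evalLastZero) = Ideal.Quotient.mkₐ R _ := by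
    refine algHom_ext fun i => Fin.lastCases ?_ (fun j => ?_) i <;> simp [evalLastZero]
  simpa using (DFunLike.congr_fun hcomp p).symm

lemma MvPolynomial.IsHomogeneous.evalLastZero {p : MvPolynomial (Fin (m + 1)) R} {s : ℕ}
    (hp : p.IsHomogeneous s) : (evalLastZero p).IsHomogeneous s := by
  rw [_root_.evalLastZero]
  have hX : ∀ i, (Fin.snoc (α := fun _ => MvPolynomial (Fin m) R) X 0 i).IsHomogeneous 1 :=
    Fin.lastCases (by simpa using isHomogeneous_zero _ _ 1) fun j => by
      simpa using isHomogeneous_X R j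
  simpa only [one_mul] using hp.aeval (Fin.snoc X 0) hX

variable (f : Fin m → R) (u : R)

lemma exists_isHomogeneous_lift_of_mem_pow_succ {w : R} {e : ℕ}
    (hw : w ∈ Ideal.span (Set.range f) ^ (e + 1)) :
    ∃ A W : MvPolynomial (Fin m) R, A.IsHomogeneous e ∧ W.IsHomogeneous (e + 1) ∧
      eval f A = w ∧ eval f W = w ∧
      rename Fin.castSucc A * X (Fin.last m) - C u * rename Fin.castSucc W ∈
        linRel (Fin.snoc f u) := by
  rw [pow_succ] at hw
  refine Submodule.mul_induction_on hw (fun x hx y hy => ?_) ?_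
  · obtain ⟨H, hH, rfl⟩ := (Ideal.mem_span_pow_iff_exists_isHomogeneous f x).mp hx
    obtain ⟨c, rfl⟩ := (Submodule.mem_span_range_iff_exists_fun R).mp hy
    refine ⟨C (∑ i, c i • f i) * H, (∑ i, C (c i) * X i) * H, hH.C_mul _, ?_, ?_, ?_, ?_⟩
    · simpa [add_comm] using
        (IsHomogeneous.sum _ _ 1 fun i _ => isHomogeneous_C_mul_X (c i) i).mul hH
    · simp [mul_comm]
    · simp [Finset.sum_mul, mul_comm]
    · have hsplit : rename Fin.castSucc (C (∑ i, c i • f i) * H) * X (Fin.last m) -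
          C u * rename Fin.castSucc ((∑ i, C (c i) * X i) * H) =
          ∑ i, C (c i) * rename Fin.castSucc H *
            (C (f i) * X (Fin.last m) - C u * X (Fin.castSucc i)) := by
        simp only [map_mul, map_sum, rename_C, rename_X, smul_eq_mul, Finset.sum_mul,
          Finset.mul_sum, ← Finset.sum_sub_distrib]
        exact Finset.sum_congr rfl fun i _ => by ring
      rw [hsplit]
      refine Ideal.sum_mem _ fun i _ => Ideal.mul_mem_left _ _ ?_
      simpa using C_mul_X_sub_C_mul_X_mem_linRel (Fin.snoc f u) (Fin.castSucc i) (Fin.last m)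
  · rintro x y ⟨A₁, W₁, hA₁, hW₁, hA₁x, hW₁x, h₁⟩ ⟨A₂, W₂, hA₂, hW₂, hA₂y, hW₂y, h₂⟩
    refine ⟨A₁ + A₂, W₁ + W₂, hA₁.add hA₂, hW₁.add hW₂, by simp [hA₁x, hA₂y],
      by simp [hW₁x, hW₂y], ?_⟩
    convert add_mem h₁ h₂ using 1
    simp only [map_add]
    ring

lemma C_mul_mem_linRel_snoc_of_isHomogeneous
    (hu : ∀ e (w : R), u * w ∈ Ideal.span (Set.range f) ^ e → w ∈ Ideal.span (Set.range f) ^ e)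
    {r : R} (hr : r ∈ conductorIdeal f) :
    ∀ (s : ℕ) {F : MvPolynomial (Fin (m + 1)) R}, F.IsHomogeneous s →
      F ∈ reesJ (Fin.snoc f u) → C r * F ∈ linRel (Fin.snoc f u)
  | 0, F, hF, hFJ => by
    have hC : F = C (coeff 0 F) := by
      rw [← homogeneousComponent_zero, homogeneousComponent_eq_self hF]
    have h0 := (hF.mem_reesJ_iff _).mp hFJ
    rw [hC, eval_C] at h0
    rw [hC, h0, map_zero, mul_zero]
    exact zero_mem _
  | s + 1, F, hF, hFJ => by
    obtain ⟨q, hq⟩ := X_last_dvd_sub_rename_evalLastZero F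
    have hπ := hF.evalLastZero
    have hqs : q.IsHomogeneous s := (hq ▸ hF.sub hπ.rename_isHomogeneous).of_X_mul
    have hFq : eval f (evalLastZero F) + u * eval (Fin.snoc f u) q = 0 := by
      have h0 := (hF.mem_reesJ_iff _).mp hFJ
      rwa [← sub_add_cancel F (rename Fin.castSucc (evalLastZero F)), hq, map_add, map_mul,
        eval_X, Fin.snoc_last, eval_rename, Fin.snoc_comp_castSucc, add_comm] at h0
    have hw : eval (Fin.snoc f u) q ∈ Ideal.span (Set.range f) ^ (s + 1) := by
      refine hu _ _ ?_
      rw [eq_neg_of_add_eq_zero_right hFq]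
      exact neg_mem ((Ideal.mem_span_pow_iff_exists_isHomogeneous f _).mpr ⟨_, hπ, rfl⟩)
    obtain ⟨A, W, hA, hW, hAw, hWw, hAW⟩ := exists_isHomogeneous_lift_of_mem_pow_succ f u hw
    have hq' : C r * (q - rename Fin.castSucc A) ∈ linRel (Fin.snoc f u) := by
      have hqA := hqs.sub (hA.rename_isHomogeneous (f := Fin.castSucc))
      refine C_mul_mem_linRel_snoc_of_isHomogeneous hu hr s hqA ((hqA.mem_reesJ_iff _).mpr ?_)
      rw [map_sub, eval_rename, Fin.snoc_comp_castSucc, hAw, sub_self]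
    have hG : C r * (evalLastZero F + C u * W) ∈ linRel f := by
      refine (mem_conductorIdeal_iff f).mp hr _ (((hπ.add (hW.C_mul u)).mem_reesJ_iff f).mpr ?_)
      rw [map_add, map_mul, eval_C, hWw, hFq]
    have hsplit : C r * F = rename Fin.castSucc (C r * (evalLastZero F + C u * W)) +
        C r * (rename Fin.castSucc A * X (Fin.last m) - C u * rename Fin.castSucc W) +
        X (Fin.last m) * (C r * (q - rename Fin.castSucc A)) := by
      simp only [map_mul, map_add, rename_C]
      linear_combination C r * hq
    rw [hsplit]
    refine add_mem (add_mem ?_ (Ideal.mul_mem_left _ _ hAW)) (Ideal.mul_mem_left _ _ hq')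
    exact rename_mem_linRel (by rwa [Fin.snoc_comp_castSucc])

lemma conductorIdeal_le_conductorIdeal_snoc
    (hu : ∀ e (w : R), u * w ∈ Ideal.span (Set.range f) ^ e → w ∈ Ideal.span (Set.range f) ^ e) :
    conductorIdeal f ≤ conductorIdeal (Fin.snoc f u) := by
  intro r hr
  refine (mem_conductorIdeal_iff _).mpr fun p hp => ?_
  rw [← sum_homogeneousComponent p, Finset.mul_sum]
  exact Ideal.sum_mem _ fun s _ => C_mul_mem_linRel_snoc_of_isHomogeneous f u hu hr s
    (homogeneousComponent_isHomogeneous s p) (homogeneousComponent_mem_reesJ _ hp s)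

end Snoc

section MonomialIdeal

open scoped Pointwise

variable (R : Type*) [CommSemiring R] {σ : Type*}

noncomputable def monomialIdeal (S : Set (σ →₀ ℕ)) : Ideal (MvPolynomial σ R) :=
  Ideal.span ((fun a => monomial a 1) '' S)

variable {R}

lemma exists_monomialIdeal_pow_eq (P : AddSubmonoid (σ →₀ ℕ)) {A : Set (σ →₀ ℕ)}
    (hA : A ⊆ P) (e : ℕ) : ∃ B ⊆ (P : Set (σ →₀ ℕ)), monomialIdeal R A ^ e = monomialIdeal R B := by
  induction e with
  | zero => exact ⟨{0}, by simp [zero_mem P], by simp [monomialIdeal, Ideal.one_eq_top]⟩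
  | succ e ih =>
    obtain ⟨B, hB, hBe⟩ := ih
    refine ⟨B + A, ?_, ?_⟩
    · rintro _ ⟨b, hb, a, ha, rfl⟩
      exact P.add_mem (hB hb) (hA ha)
    · rw [pow_succ, hBe, monomialIdeal, monomialIdeal, monomialIdeal, Ideal.span_mul_span',
        ← Set.image2_add, Set.image_image2, ← Set.image2_mul, Set.image2_image_left,
        Set.image2_image_right]
      simp only [monomial_mul, one_mul]

lemma mem_monomialIdeal_of_monomial_mul_mem {t : σ →₀ ℕ} {A : Set (σ →₀ ℕ)}
    (hA : A ⊆ Finsupp.supported ℕ ℕ {x | t x = 0}) {w : MvPolynomial σ R}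
    (hw : monomial t 1 * w ∈ monomialIdeal R A) : w ∈ monomialIdeal R A := by
  rw [monomialIdeal, mem_ideal_span_monomial_image] at hw ⊢
  intro d hd
  obtain ⟨a, ha, had⟩ := hw (t + d) (by
    rw [mem_support_iff, coeff_monomial_mul, one_mul]
    exact mem_support_iff.mp hd)
  refine ⟨a, ha, fun x => ?_⟩
  by_cases hx : t x = 0
  · simpa [hx] using had x
  · simp [(Finsupp.mem_supported' _ _).mp (hA ha) x hx]

variable {I : Ideal (MvPolynomial σ R)} {t : σ →₀ ℕ}

lemma monomial_filter_mem_of_colon_eq (hI : I.colon (Ideal.span {monomial t (1 : R)}) = I)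
    {s : σ →₀ ℕ} (hs : monomial s 1 ∈ I) : monomial (s.filter (t · = 0)) 1 ∈ I := by
  have hpow : ∀ N (w : MvPolynomial σ R), w * monomial t 1 ^ N ∈ I → w ∈ I := by
    intro N
    induction N with
    | zero => simp
    | succ N ih =>
      intro w hw
      rw [pow_succ, ← mul_assoc] at hw
      exact ih _ (by rw [← hI]; exact Ideal.mem_colon_span_singleton.mpr hw)
  refine hpow s.degree _ ?_
  have hle : s ≤ s.filter (t · = 0) + s.degree • t := fun x => by
    rw [Finsupp.add_apply, Finsupp.filter_apply, Finsupp.smul_apply, smul_eq_mul]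
    split_ifs with hx
    · exact Nat.le_add_right _ _
    · rw [zero_add]
      exact (Finsupp.le_degree x s).trans (Nat.le_mul_of_pos_right _ (Nat.pos_of_ne_zero hx))
  rw [monomial_pow, one_pow, monomial_mul, one_mul, ← add_tsub_cancel_of_le hle, ← one_mul 1,
    ← monomial_mul]
  exact I.mul_mem_right _ hs

variable {S : Set (σ →₀ ℕ)}

lemma monomialIdeal_eq_monomialIdeal_filter
    (hI : (monomialIdeal R S).colon (Ideal.span {monomial t (1 : R)}) = monomialIdeal R S) :
    monomialIdeal R S = monomialIdeal R ((fun s => s.filter (t · = 0)) '' S) := by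
  refine le_antisymm (Ideal.span_le.mpr ?_) (Ideal.span_le.mpr ?_)
  · rintro _ ⟨s, hs, rfl⟩
    have hle : s.filter (t · = 0) ≤ s := fun x => by
      rw [Finsupp.filter_apply]
      split_ifs <;> simp
    have hsplit : monomial s (1 : R) = monomial (s.filter (t · = 0)) 1 *
        monomial (s - s.filter (t · = 0)) 1 := by
      rw [monomial_mul, one_mul, add_tsub_cancel_of_le hle]
    simp only [SetLike.mem_coe]
    rw [hsplit]
    exact Ideal.mul_mem_right _ _ (Ideal.subset_span ⟨_, ⟨s, hs, rfl⟩, rfl⟩)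
  · rintro _ ⟨_, ⟨s, hs, rfl⟩, rfl⟩
    exact monomial_filter_mem_of_colon_eq hI (Ideal.subset_span ⟨s, hs, rfl⟩)

lemma mem_monomialIdeal_pow_of_monomial_mul_mem
    (hI : (monomialIdeal R S).colon (Ideal.span {monomial t (1 : R)}) = monomialIdeal R S)
    (e : ℕ) {w : MvPolynomial σ R} (hw : monomial t 1 * w ∈ monomialIdeal R S ^ e) :
    w ∈ monomialIdeal R S ^ e := by
  have hfilter : (fun s => s.filter (t · = 0)) '' S ⊆ Finsupp.supported ℕ ℕ {x | t x = 0} := by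
    rintro _ ⟨s, -, rfl⟩
    exact (Finsupp.mem_supported' _ _).mpr fun x hx => Finsupp.filter_apply_neg _ _ hx
  obtain ⟨B, hB, hBe⟩ :=
    exists_monomialIdeal_pow_eq (R := R) (Finsupp.supported ℕ ℕ {x | t x = 0}).toAddSubmonoid
      hfilter e
  rw [monomialIdeal_eq_monomialIdeal_filter hI, hBe] at hw ⊢
  exact mem_monomialIdeal_of_monomial_mul_mem hB hw

end MonomialIdeal

/-- For a monomial ideal `I ⊆ K[x₁,…,x_n]` and a monomial `u`
which is a non-zerodivisor modulo `I` (i.e. `I : u = I`), there is a positive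
integer `k` with `(C(I), uᵏ) ⊆ C((I,u))`. -/
theorem stmt_10 {K : Type} [Field K] {n m : ℕ}
    (f : Fin m → MvPolynomial (Fin n) K)
    (hf : ∀ j, ∃ s : Fin n →₀ ℕ, f j = MvPolynomial.monomial s 1)
    (I : Ideal (MvPolynomial (Fin n) K)) (hI : I = Ideal.span (Set.range f))
    (u : MvPolynomial (Fin n) K) (hu : ∃ t : Fin n →₀ ℕ, u = MvPolynomial.monomial t 1)
    (hreg : I.colon (Ideal.span {u}) = I) :
    ∃ k : ℕ, 0 < k ∧
      conductorIdeal f ⊔ Ideal.span {u ^ k} ≤ conductorIdeal (Fin.snoc f u) := by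
  subst hI
  obtain ⟨t, rfl⟩ := hu
  choose s hs using hf
  have hspan : Ideal.span (Set.range f) = monomialIdeal K (Set.range s) := by
    rw [monomialIdeal, ← Set.range_comp]
    exact congrArg (Ideal.span ∘ Set.range) (funext hs)
  have hcolon : ∀ e w, monomial t 1 * w ∈ Ideal.span (Set.range f) ^ e →
      w ∈ Ideal.span (Set.range f) ^ e := by
    rw [hspan] at hreg ⊢
    exact fun e _ => mem_monomialIdeal_pow_of_monomial_mul_mem hreg e
  obtain ⟨k, hk, hkC⟩ := exists_pow_mem_conductorIdeal (Fin.snoc f (monomial t 1)) (Fin.last m)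
  rw [Fin.snoc_last] at hkC
  exact ⟨k, hk, sup_le (conductorIdeal_le_conductorIdeal_snoc f _ hcolon)
    ((Ideal.span_singleton_le_iff_mem _).mpr hkC)⟩
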